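/- The quantity C_{g−1}(J;W) := min( min_{1≤i<j≤g+1} (J_i + J_j), min_{1≤i<j≤g+1} (W_i + W_j), min_{(i,j)} (J_i + W_j) ), where the last minimum is taken over all pairs 1 ≤ i, j ≤ g+1 with j ≢ i and j ≢ i−1 modulo g+1 (this last family may be empty, in which case it is omitted from the minimum), is a conserved quantity of the UD-pTL: if Σ_{i=1}^{g+1} J_i < Σ_{i=1}^{g+1} W_i, then C_{g−1}(J̄;W̄) = C_{g−1}(J;W). -/

import Mathlib

/-!
Both inequalities are proved sum by sum: every sum entering one side of the identity dominates
some sum entering the other side. The dictionary between old and new sums comes from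
`J̄_i ≤ W_i`, `J̄_i ≤ X_i + J_i`, `J_{i+1} ≤ W̄_i` and the recursion
`X_{i+1} ≤ max 0 (X_i + J_i - W_i)`, which forces `J̄_i = W_i` and `W̄_i = J_{i+1}` as soon as
`X_{i+1} > 0`. Thus `J̄_i ≤ J_i` when `X_i = 0` and `W̄_{i-1} = J_i` when `X_i > 0`; the one
pair this misses, `J_i + J_{i+1}` with `X_i = 0 < X_{i+1}`, is bounded by `J̄_i + J̄_{i+1}` using
the recursion once more.
-/

/-- `X_i = max_{0 ≤ k ≤ g} Σ_{l=1}^{k} (J_{i-l} - W_{i-l})`, indices cyclic mod `g+1`. -/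
noncomputable def udX (g : ℕ) (J W : Fin (g + 1) → ℝ) (i : Fin (g + 1)) : ℝ :=
  (Finset.range (g + 1)).sup' ⟨0, Finset.mem_range.mpr (Nat.succ_pos g)⟩
    (fun k => ∑ l ∈ Finset.Icc 1 k, (J (i - (Fin.ofNat (g + 1) l)) - W (i - (Fin.ofNat (g + 1) l))))

/-- `J̄_i = min(W_i, X_i + J_i)`. -/
noncomputable def udJbar (g : ℕ) (J W : Fin (g + 1) → ℝ) (i : Fin (g + 1)) : ℝ :=
  min (W i) (udX g J W i + J i)

/-- `W̄_i = J_{i+1} + W_i - J̄_i`. -/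
noncomputable def udWbar (g : ℕ) (J W : Fin (g + 1) → ℝ) (i : Fin (g + 1)) : ℝ :=
  J (i + 1) + W i - udJbar g J W i


/-- `C_{g-1}(J;W)`, as an element of `WithTop ℝ`: the minimum of
`J_i + J_j` and `W_i + W_j` over pairs `i < j`, together with `J_i + W_j`
over pairs with `j ≢ i` and `j ≢ i - 1 (mod g+1)`; an empty family
contributes `⊤`, i.e. is omitted from the minimum. -/
noncomputable def udCgm1 (g : ℕ) (J W : Fin (g + 1) → ℝ) : WithTop ℝ :=
  (Finset.univ.filter (fun p : Fin (g + 1) × Fin (g + 1) => p.1 < p.2)).inf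
      (fun p => ((J p.1 + J p.2 : ℝ) : WithTop ℝ)) ⊓
  (Finset.univ.filter (fun p : Fin (g + 1) × Fin (g + 1) => p.1 < p.2)).inf
      (fun p => ((W p.1 + W p.2 : ℝ) : WithTop ℝ)) ⊓
  (Finset.univ.filter
      (fun p : Fin (g + 1) × Fin (g + 1) => p.2 ≠ p.1 ∧ p.2 ≠ p.1 - 1)).inf
      (fun p => ((J p.1 + W p.2 : ℝ) : WithTop ℝ))

open Finset

section BackwardSum

variable {M : Type*} [AddCommMonoid M] {n : ℕ} [NeZero n] (f : Fin n → M)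

def backwardSum (i : Fin n) (k : ℕ) : M :=
  ∑ l ∈ Icc 1 k, f (i - Fin.ofNat n l)

@[simp]
lemma backwardSum_zero (i : Fin n) : backwardSum f i 0 = 0 := by
  simp [backwardSum]

lemma backwardSum_succ (i : Fin n) (k : ℕ) :
    backwardSum f (i + 1) (k + 1) = f i + backwardSum f i k := by
  have shift (l : ℕ) : i + 1 - Fin.ofNat n (l + 1) = i - Fin.ofNat n l := by
    rw [show Fin.ofNat n (l + 1) = Fin.ofNat n l + 1 by ext; simp [Fin.val_add, Nat.add_mod]]
    abel
  induction k with
  | zero => simpa [backwardSum] using congrArg f (shift 0)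
  | succ k ih =>
    simp only [backwardSum] at ih ⊢
    rw [sum_Icc_succ_top (by omega), ih, sum_Icc_succ_top (by omega), shift, add_assoc]

lemma backwardSum_one (i : Fin n) : backwardSum f i 1 = f (i - 1) := by
  simpa using backwardSum_succ f (i - 1) 0

end BackwardSum

section Dynamics

variable {g : ℕ} (J W : Fin (g + 1) → ℝ)

lemma udX_eq_sup' (i : Fin (g + 1)) :
    udX g J W i = (range (g + 1)).sup' ⟨0, mem_range.mpr g.succ_pos⟩
      (backwardSum (fun j => J j - W j) i) := rfl

lemma backwardSum_le_udX (i : Fin (g + 1)) {k : ℕ} (hk : k ≤ g) :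
    backwardSum (fun j => J j - W j) i k ≤ udX g J W i := by
  rw [udX_eq_sup']
  exact le_sup' _ (mem_range.mpr (Nat.lt_succ_of_le hk))

lemma udX_nonneg (i : Fin (g + 1)) : 0 ≤ udX g J W i := by
  simpa using backwardSum_le_udX J W i (Nat.zero_le g)

lemma sub_le_udX (hg : 1 ≤ g) (i : Fin (g + 1)) : J (i - 1) - W (i - 1) ≤ udX g J W i := by
  simpa [backwardSum_one] using backwardSum_le_udX J W i hg

lemma udX_succ_le (i : Fin (g + 1)) :
    udX g J W (i + 1) ≤ max 0 (udX g J W i + J i - W i) := by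
  rw [udX_eq_sup']
  refine sup'_le _ _ fun k hk => ?_
  cases k with
  | zero => simp
  | succ k =>
    rw [backwardSum_succ]
    have := backwardSum_le_udX J W i (k := k) (by simp at hk; omega)
    exact le_max_of_le_right (by linarith)

lemma udJbar_le_W (i : Fin (g + 1)) : udJbar g J W i ≤ W i := min_le_left _ _

lemma udJbar_le_udX_add (i : Fin (g + 1)) : udJbar g J W i ≤ udX g J W i + J i :=
  min_le_right _ _

lemma udJbar_eq_or (i : Fin (g + 1)) :
    udJbar g J W i = W i ∨ udJbar g J W i = udX g J W i + J i :=
  min_choice _ _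

lemma udJbar_le_of_udX_nonpos {i : Fin (g + 1)} (h : udX g J W i ≤ 0) :
    udJbar g J W i ≤ J i := by
  linarith [udJbar_le_udX_add J W i]

lemma le_udWbar (i : Fin (g + 1)) : J (i + 1) ≤ udWbar g J W i := by
  linarith [udJbar_le_W J W i, show udWbar g J W i = J (i + 1) + W i - udJbar g J W i from rfl]

lemma udJbar_eq_of_udX_succ_pos {i : Fin (g + 1)} (h : 0 < udX g J W (i + 1)) :
    udJbar g J W i = W i := by
  refine min_eq_left (le_of_lt ?_)
  have := udX_succ_le J W i
  by_contra! hle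
  linarith [max_eq_left (show udX g J W i + J i - W i ≤ 0 by linarith)]

lemma udWbar_sub_one_eq {i : Fin (g + 1)} (h : 0 < udX g J W i) :
    udWbar g J W (i - 1) = J i := by
  rw [← sub_add_cancel i 1] at h
  rw [udWbar, udJbar_eq_of_udX_succ_pos J W h, sub_add_cancel]
  ring

lemma udJbar_add_udJbar_succ_le {i : Fin (g + 1)} (h₀ : udX g J W i ≤ 0)
    (h₁ : 0 < udX g J W (i + 1)) :
    udJbar g J W i + udJbar g J W (i + 1) ≤ J i + J (i + 1) := by
  have hX := udX_succ_le J W i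
  have hpos : 0 < udX g J W i + J i - W i := by simpa using h₁.trans_le hX
  rw [max_eq_right hpos.le] at hX
  linarith [udJbar_eq_of_udX_succ_pos J W h₁, udJbar_le_udX_add J W (i + 1)]

end Dynamics

lemma inf_add_pairs_le {ι : Type*} [Fintype ι] [LinearOrder ι] (f : ι → ℝ) {a b : ι}
    (hab : a ≠ b) :
    (univ.filter (fun p : ι × ι => p.1 < p.2)).inf
        (fun p => ((f p.1 + f p.2 : ℝ) : WithTop ℝ))
      ≤ ((f a + f b : ℝ) : WithTop ℝ) := by
  wlog h : a < b generalizing a b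
  · rw [add_comm]
    exact this hab.symm (hab.lt_or_gt.resolve_left h)
  exact inf_le (f := fun p : ι × ι => ((f p.1 + f p.2 : ℝ) : WithTop ℝ)) (b := (a, b))
    (by simp [h])

section Cgm1

variable {g : ℕ} (J W : Fin (g + 1) → ℝ)

lemma udCgm1_le_J_add_J {a b : Fin (g + 1)} (hab : a ≠ b) :
    udCgm1 g J W ≤ ((J a + J b : ℝ) : WithTop ℝ) :=
  inf_le_left.trans (inf_le_left.trans (inf_add_pairs_le J hab))

lemma udCgm1_le_W_add_W {a b : Fin (g + 1)} (hab : a ≠ b) :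
    udCgm1 g J W ≤ ((W a + W b : ℝ) : WithTop ℝ) :=
  inf_le_left.trans (inf_le_right.trans (inf_add_pairs_le W hab))

lemma udCgm1_le_J_add_W {a b : Fin (g + 1)} (h₁ : b ≠ a) (h₂ : b ≠ a - 1) :
    udCgm1 g J W ≤ ((J a + W b : ℝ) : WithTop ℝ) :=
  inf_le_right.trans <|
    inf_le (f := fun p : Fin (g + 1) × Fin (g + 1) => ((J p.1 + W p.2 : ℝ) : WithTop ℝ))
      (b := (a, b)) (by simp [h₁, h₂])

lemma le_udCgm1 {c : WithTop ℝ}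
    (hJJ : ∀ a b, a ≠ b → c ≤ ((J a + J b : ℝ) : WithTop ℝ))
    (hWW : ∀ a b, a ≠ b → c ≤ ((W a + W b : ℝ) : WithTop ℝ))
    (hJW : ∀ a b, b ≠ a → b ≠ a - 1 → c ≤ ((J a + W b : ℝ) : WithTop ℝ)) :
    c ≤ udCgm1 g J W := by
  refine le_inf (le_inf ?_ ?_) ?_ <;> refine Finset.le_inf fun p hp => ?_ <;>
    rw [mem_filter] at hp
  · exact hJJ _ _ hp.2.ne
  · exact hWW _ _ hp.2.ne
  · exact hJW _ _ hp.2.1 hp.2.2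

end Cgm1

section Conservation

variable {g : ℕ} (J W : Fin (g + 1) → ℝ)

lemma udCgm1_bar_le_W_add_W {a b : Fin (g + 1)} (hab : a ≠ b) :
    udCgm1 g (udJbar g J W) (udWbar g J W) ≤ ((W a + W b : ℝ) : WithTop ℝ) :=
  (udCgm1_le_J_add_J _ _ hab).trans
    (WithTop.coe_le_coe.2 (add_le_add (udJbar_le_W J W a) (udJbar_le_W J W b)))

lemma udCgm1_bar_le_J_add_W {a b : Fin (g + 1)} (h₁ : b ≠ a) (h₂ : b ≠ a - 1) :
    udCgm1 g (udJbar g J W) (udWbar g J W) ≤ ((J a + W b : ℝ) : WithTop ℝ) := by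
  rcases le_or_gt (udX g J W a) 0 with ha | ha
  · exact (udCgm1_le_J_add_J _ _ h₁.symm).trans (WithTop.coe_le_coe.2
      (add_le_add (udJbar_le_of_udX_nonpos J W ha) (udJbar_le_W J W b)))
  · have h := udCgm1_le_J_add_W (udJbar g J W) (udWbar g J W) h₂.symm
      (sub_left_injective.ne h₁.symm)
    rw [udWbar_sub_one_eq J W ha] at h
    exact h.trans (WithTop.coe_le_coe.2 (by linarith [udJbar_le_W J W b]))

lemma udCgm1_bar_le_J_add_J_of_nonpos_of_pos {a b : Fin (g + 1)} (hab : a ≠ b)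
    (ha : udX g J W a ≤ 0) (hb : 0 < udX g J W b) :
    udCgm1 g (udJbar g J W) (udWbar g J W) ≤ ((J a + J b : ℝ) : WithTop ℝ) := by
  by_cases hba : b = a + 1
  · subst hba
    exact (udCgm1_le_J_add_J _ _ hab).trans
      (WithTop.coe_le_coe.2 (udJbar_add_udJbar_succ_le J W ha hb))
  · have h := udCgm1_le_J_add_W (udJbar g J W) (udWbar g J W)
      (fun h => hba (sub_eq_iff_eq_add.mp h)) (sub_left_injective.ne hab.symm)
    rw [udWbar_sub_one_eq J W hb] at h
    exact h.trans (WithTop.coe_le_coe.2 (by linarith [udJbar_le_of_udX_nonpos J W ha]))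

lemma udCgm1_bar_le_J_add_J {a b : Fin (g + 1)} (hab : a ≠ b) :
    udCgm1 g (udJbar g J W) (udWbar g J W) ≤ ((J a + J b : ℝ) : WithTop ℝ) := by
  wlog hle : udX g J W a ≤ udX g J W b generalizing a b
  · rw [add_comm]
    exact this hab.symm (le_of_not_ge hle)
  rcases le_or_gt (udX g J W b) 0 with hb | hb
  · exact (udCgm1_le_J_add_J _ _ hab).trans (WithTop.coe_le_coe.2 (add_le_add
      (udJbar_le_of_udX_nonpos J W (hle.trans hb)) (udJbar_le_of_udX_nonpos J W hb)))
  rcases le_or_gt (udX g J W a) 0 with ha | ha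
  · exact udCgm1_bar_le_J_add_J_of_nonpos_of_pos J W hab ha hb
  · have h := udCgm1_le_W_add_W (udJbar g J W) (udWbar g J W)
      ((sub_left_injective (b := 1)).ne hab)
    rwa [udWbar_sub_one_eq J W ha, udWbar_sub_one_eq J W hb] at h

lemma udCgm1_le_W_add_udX_add_J {a b : Fin (g + 1)} (hab : a ≠ b) :
    udCgm1 g J W ≤ ((W a + (udX g J W b + J b) : ℝ) : WithTop ℝ) := by
  by_cases hab₁ : a = b - 1
  · have hg : 1 ≤ g := by
      have := Fin.nontrivial_iff_two_le.mp (nontrivial_of_ne a b hab)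
      omega
    subst hab₁
    exact (udCgm1_le_J_add_J J W hab).trans
      (WithTop.coe_le_coe.2 (by linarith [sub_le_udX J W hg b]))
  · exact (udCgm1_le_J_add_W J W hab hab₁).trans
      (WithTop.coe_le_coe.2 (by linarith [udX_nonneg J W b]))

lemma udCgm1_le_udJbar_add_udJbar {a b : Fin (g + 1)} (hab : a ≠ b) :
    udCgm1 g J W ≤ ((udJbar g J W a + udJbar g J W b : ℝ) : WithTop ℝ) := by
  rcases udJbar_eq_or J W a with ha | ha <;> rcases udJbar_eq_or J W b with hb | hb <;>
    rw [ha, hb]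
  · exact udCgm1_le_W_add_W J W hab
  · exact udCgm1_le_W_add_udX_add_J J W hab
  · rw [add_comm]
    exact udCgm1_le_W_add_udX_add_J J W hab.symm
  · exact (udCgm1_le_J_add_J J W hab).trans
      (WithTop.coe_le_coe.2 (by linarith [udX_nonneg J W a, udX_nonneg J W b]))

lemma udCgm1_le_udWbar_add_udWbar {a b : Fin (g + 1)} (hab : a ≠ b) :
    udCgm1 g J W ≤ ((udWbar g J W a + udWbar g J W b : ℝ) : WithTop ℝ) :=
  (udCgm1_le_J_add_J J W ((add_left_injective 1).ne hab)).trans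
    (WithTop.coe_le_coe.2 (add_le_add (le_udWbar J W a) (le_udWbar J W b)))

lemma udCgm1_le_udJbar_add_udWbar {a b : Fin (g + 1)} (h₁ : b ≠ a) (h₂ : b ≠ a - 1) :
    udCgm1 g J W ≤ ((udJbar g J W a + udWbar g J W b : ℝ) : WithTop ℝ) := by
  have hab : a ≠ b + 1 := fun h => h₂ (eq_sub_of_add_eq h.symm)
  rcases udJbar_eq_or J W a with ha | ha <;> rw [ha]
  · refine (udCgm1_le_J_add_W J W hab (by rw [add_sub_cancel_right]; exact h₁.symm)).trans
      (WithTop.coe_le_coe.2 (by linarith [le_udWbar J W b]))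
  · exact (udCgm1_le_J_add_J J W hab).trans
      (WithTop.coe_le_coe.2 (by linarith [le_udWbar J W b, udX_nonneg J W a]))

end Conservation

theorem udpToda_Cgm1_conserved_general (g : ℕ) (J W : Fin (g + 1) → ℝ) :
    udCgm1 g (udJbar g J W) (udWbar g J W) = udCgm1 g J W :=
  le_antisymm
    (le_udCgm1 J W (fun _ _ => udCgm1_bar_le_J_add_J J W) (fun _ _ => udCgm1_bar_le_W_add_W J W)
      (fun _ _ => udCgm1_bar_le_J_add_W J W))
    (le_udCgm1 _ _ (fun _ _ => udCgm1_le_udJbar_add_udJbar J W)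
      (fun _ _ => udCgm1_le_udWbar_add_udWbar J W) (fun _ _ => udCgm1_le_udJbar_add_udWbar J W))

/-- `C_{g-1}` is a conserved quantity of the UD-pTL. -/
theorem udpToda_Cgm1_conserved (g : ℕ) (hg : 1 ≤ g) (J W : Fin (g + 1) → ℝ)
    (h : ∑ i, J i < ∑ i, W i) :
    udCgm1 g (udJbar g J W) (udWbar g J W) = udCgm1 g J W :=
  udpToda_Cgm1_conserved_general g J W
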